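/- arXiv:1505.06682 — 4 statements merged into one kernel-verified Lean document; each statement's English description precedes it below -/
import Mathlib

section
/- Let A be a C*-algebra, H₁, H₂ Hilbert spaces, and π_j : A → B(H_j) *-homomorphisms such that every bounded intertwiner from π₁ to π₂ is zero and every bounded intertwiner from π₂ to π₁ is zero. Then the orthogonal projection of H₁ ⊕ H₂ onto H₁ lies in the strong operator topology closure of (π₁ ⊕ π₂)(A) in B(H₁ ⊕ H₂). -/
/-!
Write `σ = π₁ ⊕ π₂` and `P = 1 ⊕ 0`. The off-diagonal corners of an operator commuting with `σ(A)`
intertwine `π₁` and `π₂`, so they vanish and the operator commutes with `P`: `P` lies in the double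
commutant of `σ(A)`. For a single vector `ξ`, the closed subspace `closure (σ(A) ξ)` is invariant
under the `*`-closed set `σ(A)`, so its orthogonal projection lies in the commutant and therefore
commutes with `P`; as the subspace contains `ξ`, it contains `P ξ`. Finitely many vectors reduce to
one by passing to the ampliation `σ ⊕ ⋯ ⊕ σ`, whose double commutant contains `P ⊕ ⋯ ⊕ P`.
-/

open ContinuousLinearMap Module.End

section Ampliation

variable (𝕜 E : Type*) [RCLike 𝕜] [NormedAddCommGroup E] [InnerProductSpace 𝕜 E]
  [CompleteSpace E] (ι : Type*) [Fintype ι]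

noncomputable def ampliation :
    (E →L[𝕜] E) →⋆ₐ[𝕜] (PiLp 2 (fun _ : ι => E) →L[𝕜] PiLp 2 (fun _ : ι => E)) where
  toFun T := (PiLp.continuousLinearEquiv 2 𝕜 _).symm.toContinuousLinearMap ∘L
    piMap (fun _ => T) ∘L (PiLp.continuousLinearEquiv 2 𝕜 _).toContinuousLinearMap
  map_one' := rfl
  map_mul' _ _ := rfl
  map_zero' := rfl
  map_add' _ _ := rfl
  commutes' _ := rfl
  map_star' T := by
    refine ((eq_adjoint_iff _ _).2 fun x y => ?_).trans (star_eq_adjoint _).symm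
    simp only [PiLp.inner_apply]
    exact Finset.sum_congr rfl fun i _ => adjoint_inner_left T (y i) (x i)

variable {𝕜 E ι}

@[simp]
theorem ampliation_apply (T : E →L[𝕜] E) (x : PiLp 2 (fun _ : ι => E)) (i : ι) :
    ampliation 𝕜 E ι T x i = T (x i) := rfl

theorem ampliation_mem_centralizer_centralizer {S : Set (E →L[𝕜] E)} {T : E →L[𝕜] E}
    (hT : T ∈ S.centralizer.centralizer) :
    ampliation 𝕜 E ι T ∈ (ampliation 𝕜 E ι '' S).centralizer.centralizer := by
  classical
  intro q hq
  let single (j : ι) : E →L[𝕜] PiLp 2 (fun _ : ι => E) :=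
    (PiLp.continuousLinearEquiv 2 𝕜 _).symm.toContinuousLinearMap ∘L
      ContinuousLinearMap.single 𝕜 (fun _ => E) j
  let entry (i j : ι) : E →L[𝕜] E := PiLp.proj 2 (fun _ => E) i ∘L q ∘L single j
  have hsingle (s : E →L[𝕜] E) (j : ι) (z : E) :
      single j (s z) = ampliation 𝕜 E ι s (single j z) := by
    ext i
    by_cases h : i = j
    · subst h; simp [single]
    · simp [single, h]
  have hentry (i j : ι) : entry i j ∈ S.centralizer := by
    intro s hs
    have hqs : ampliation 𝕜 E ι s * q = q * ampliation 𝕜 E ι s := hq _ ⟨s, hs, rfl⟩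
    ext z
    change s (q (single j z) i) = q (single j (s z)) i
    rw [hsingle, ← mul_apply_eq_comp q, ← hqs]
    rfl
  have hsum (x : PiLp 2 (fun _ : ι => E)) (i : ι) : q x i = ∑ j, entry i j (x j) := by
    conv_lhs => rw [← x.toLp_ofLp, ← Finset.univ_sum_single x.ofLp]
    simp [entry, single, map_sum]
  ext x i
  simp only [mul_apply_eq_comp, hsum, ampliation_apply, map_sum]
  exact Finset.sum_congr rfl fun j _ => congr($(hT _ (hentry i j)) (x j))

end Ampliation

theorem Submodule.commute_starProjection_of_mem_invtSubmodule {𝕜 E : Type*} [RCLike 𝕜]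
    [NormedAddCommGroup E] [InnerProductSpace 𝕜 E] [CompleteSpace E] {K : Submodule 𝕜 E}
    [K.HasOrthogonalProjection] {T : E →L[𝕜] E} (hT : K ∈ invtSubmodule T.toLinearMap)
    (hT' : K ∈ invtSubmodule (adjoint T).toLinearMap) : Commute K.starProjection T := by
  rw [K.isIdempotentElem_starProjection.commute_iff, range_starProjection, ker_starProjection]
  exact ⟨hT, orthogonal_mem_invtSubmodule hT'⟩

section CyclicSubspace

variable {𝕜 E A : Type*} [RCLike 𝕜] [NormedAddCommGroup E] [InnerProductSpace 𝕜 E]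
  [CompleteSpace E] [Semiring A] [Star A] [Algebra 𝕜 A] (ρ : A →⋆ₐ[𝕜] (E →L[𝕜] E))

noncomputable def cyclicSubspace (ξ : E) : Submodule 𝕜 E :=
  (LinearMap.range ((ContinuousLinearMap.apply 𝕜 E ξ).toLinearMap ∘ₗ
    ρ.toAlgHom.toLinearMap)).topologicalClosure

instance (ξ : E) : CompleteSpace (cyclicSubspace ρ ξ) :=
  Submodule.topologicalClosure.completeSpace _

theorem coe_cyclicSubspace (ξ : E) :
    (cyclicSubspace ρ ξ : Set E) = closure (Set.range fun a => ρ a ξ) :=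
  Submodule.topologicalClosure_coe _

theorem mem_cyclicSubspace_self (ξ : E) : ξ ∈ cyclicSubspace ρ ξ :=
  Submodule.le_topologicalClosure _ ⟨1, by simp⟩

theorem cyclicSubspace_mem_invtSubmodule (a : A) (ξ : E) :
    cyclicSubspace ρ ξ ∈ invtSubmodule (ρ a).toLinearMap := by
  rw [mem_invtSubmodule_iff_forall_mem_of_mem]
  intro x hx
  rw [← SetLike.mem_coe, coe_cyclicSubspace] at hx ⊢
  refine map_mem_closure (ρ a).continuous hx ?_
  rintro _ ⟨b, rfl⟩
  exact ⟨a * b, by simp⟩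

theorem commute_starProjection_cyclicSubspace (a : A) (ξ : E) :
    Commute (cyclicSubspace ρ ξ).starProjection (ρ a) := by
  refine Submodule.commute_starProjection_of_mem_invtSubmodule
    (cyclicSubspace_mem_invtSubmodule ρ a ξ) ?_
  rw [← star_eq_adjoint, ← map_star]
  exact cyclicSubspace_mem_invtSubmodule ρ (star a) ξ

theorem apply_mem_cyclicSubspace_of_mem_centralizer {T : E →L[𝕜] E}
    (hT : T ∈ (Set.range ρ).centralizer.centralizer) (ξ : E) :
    T ξ ∈ cyclicSubspace ρ ξ := by
  set Q := (cyclicSubspace ρ ξ).starProjection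
  have hQ : Q ∈ (Set.range ρ).centralizer := by
    rintro _ ⟨a, rfl⟩
    exact (commute_starProjection_cyclicSubspace ρ a ξ).symm.eq
  have hQT : Q (T ξ) = T ξ := by
    conv_rhs => rw [← Submodule.starProjection_eq_self_iff.2 (mem_cyclicSubspace_self ρ ξ)]
    exact congr($(hT Q hQ) ξ)
  rw [← hQT]
  exact Submodule.starProjection_apply_mem _ _

theorem exists_forall_norm_sub_lt_of_mem_centralizer_centralizer {T : E →L[𝕜] E}
    (hT : T ∈ (Set.range ρ).centralizer.centralizer) {ι : Type*} [Fintype ι] (ξ : ι → E)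
    {ε : ℝ} (hε : 0 < ε) : ∃ a, ∀ i, ‖ρ a (ξ i) - T (ξ i)‖ < ε := by
  have hampl : ampliation 𝕜 E ι T ∈
      (Set.range ((ampliation 𝕜 E ι).comp ρ)).centralizer.centralizer := by
    rw [StarAlgHom.coe_comp, Set.range_comp]
    exact ampliation_mem_centralizer_centralizer hT
  have hξ := apply_mem_cyclicSubspace_of_mem_centralizer _ hampl (WithLp.toLp 2 ξ)
  rw [← SetLike.mem_coe, coe_cyclicSubspace, Metric.mem_closure_iff] at hξ
  obtain ⟨_, ⟨a, rfl⟩, hdist⟩ := hξ ε hε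
  rw [dist_comm, dist_eq_norm] at hdist
  exact ⟨a, fun i => (PiLp.norm_apply_le _ i).trans_lt hdist⟩

end CyclicSubspace

section BlockDiagonal

variable (𝕜 H₁ H₂ : Type*) [RCLike 𝕜]
  [NormedAddCommGroup H₁] [InnerProductSpace 𝕜 H₁] [CompleteSpace H₁]
  [NormedAddCommGroup H₂] [InnerProductSpace 𝕜 H₂] [CompleteSpace H₂]

noncomputable def blockDiagonal :
    (H₁ →L[𝕜] H₁) × (H₂ →L[𝕜] H₂) →⋆ₐ[𝕜] (WithLp 2 (H₁ × H₂) →L[𝕜] WithLp 2 (H₁ × H₂)) where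
  toFun S := (WithLp.prodContinuousLinearEquiv 2 𝕜 H₁ H₂).symm.toContinuousLinearMap ∘L
    S.1.prodMap S.2 ∘L (WithLp.prodContinuousLinearEquiv 2 𝕜 H₁ H₂).toContinuousLinearMap
  map_one' := rfl
  map_mul' _ _ := rfl
  map_zero' := rfl
  map_add' _ _ := rfl
  commutes' _ := rfl
  map_star' S := by
    refine ((eq_adjoint_iff _ _).2 fun x y => ?_).trans (star_eq_adjoint _).symm
    simp only [WithLp.prod_inner_apply]
    exact congr($(adjoint_inner_left S.1 y.fst x.fst) + $(adjoint_inner_left S.2 y.snd x.snd))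

variable {𝕜 H₁ H₂}

theorem blockDiagonal_one_zero_mem_centralizer_centralizer {A : Type*} [Semiring A] [Star A]
    [Algebra 𝕜 A] (π₁ : A →⋆ₐ[𝕜] (H₁ →L[𝕜] H₁)) (π₂ : A →⋆ₐ[𝕜] (H₂ →L[𝕜] H₂))
    (h₁₂ : ∀ T : H₁ →L[𝕜] H₂, (∀ a : A, T.comp (π₁ a) = (π₂ a).comp T) → T = 0)
    (h₂₁ : ∀ S : H₂ →L[𝕜] H₁, (∀ a : A, S.comp (π₂ a) = (π₁ a).comp S) → S = 0) :
    blockDiagonal 𝕜 H₁ H₂ (1, 0) ∈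
      (Set.range ((blockDiagonal 𝕜 H₁ H₂).comp (π₁.prod π₂))).centralizer.centralizer := by
  intro q hq
  have hcomm (a : A) (x : WithLp 2 (H₁ × H₂)) :
      q (WithLp.toLp 2 (π₁ a x.fst, π₂ a x.snd)) = WithLp.toLp 2 (π₁ a (q x).fst, π₂ a (q x).snd) :=
    congr($(hq _ ⟨a, rfl⟩) x).symm
  let inl : H₁ →L[𝕜] WithLp 2 (H₁ × H₂) :=
    (WithLp.prodContinuousLinearEquiv 2 𝕜 H₁ H₂).symm.toContinuousLinearMap ∘L
      ContinuousLinearMap.inl 𝕜 H₁ H₂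
  let inr : H₂ →L[𝕜] WithLp 2 (H₁ × H₂) :=
    (WithLp.prodContinuousLinearEquiv 2 𝕜 H₁ H₂).symm.toContinuousLinearMap ∘L
      ContinuousLinearMap.inr 𝕜 H₁ H₂
  have h₁₂q : WithLp.sndL 2 𝕜 H₁ H₂ ∘L q ∘L inl = 0 := h₁₂ _ fun a => by
    ext x
    simpa [inl] using congr(WithLp.snd $(hcomm a (inl x)))
  have h₂₁q : WithLp.fstL 2 𝕜 H₁ H₂ ∘L q ∘L inr = 0 := h₂₁ _ fun a => by
    ext x
    simpa [inr] using congr(WithLp.fst $(hcomm a (inr x)))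
  have hx (x : WithLp 2 (H₁ × H₂)) : x = inl x.fst + inr x.snd := by
    refine WithLp.ofLp_injective 2 (Prod.ext ?_ ?_) <;> simp [inl, inr]
  ext x
  change q (inl x.fst) = WithLp.toLp 2 ((q x).fst, 0)
  conv_rhs => rw [hx x, map_add]
  refine WithLp.ofLp_injective 2 (Prod.ext ?_ ?_)
  · simpa using congr($h₂₁q x.snd)
  · simpa using congr($h₁₂q x.fst)

end BlockDiagonal

theorem stmt6_general {A : Type*} [NormedRing A] [StarRing A] [NormedAlgebra ℂ A]
    {H₁ H₂ : Type*}
    [NormedAddCommGroup H₁] [InnerProductSpace ℂ H₁] [CompleteSpace H₁]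
    [NormedAddCommGroup H₂] [InnerProductSpace ℂ H₂] [CompleteSpace H₂]
    (π₁ : A →⋆ₐ[ℂ] (H₁ →L[ℂ] H₁)) (π₂ : A →⋆ₐ[ℂ] (H₂ →L[ℂ] H₂))
    (h₁₂ : ∀ T : H₁ →L[ℂ] H₂, (∀ a : A, T.comp (π₁ a) = (π₂ a).comp T) → T = 0)
    (h₂₁ : ∀ S : H₂ →L[ℂ] H₁, (∀ a : A, S.comp (π₂ a) = (π₁ a).comp S) → S = 0) :
    ∀ ε > (0 : ℝ), ∀ (n : ℕ) (ξ : Fin n → H₁ × H₂), ∃ a : A,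
      ∀ i, ‖((π₁ a).prodMap (π₂ a)) (ξ i) -
        ((ContinuousLinearMap.inl ℂ H₁ H₂).comp (ContinuousLinearMap.fst ℂ H₁ H₂)) (ξ i)‖
          < ε := by
  intro ε hε n ξ
  obtain ⟨a, ha⟩ := exists_forall_norm_sub_lt_of_mem_centralizer_centralizer _
    (blockDiagonal_one_zero_mem_centralizer_centralizer π₁ π₂ h₁₂ h₂₁)
    (fun i => WithLp.toLp 2 (ξ i)) hε
  -- the sup norm on `H₁ × H₂` is dominated by the `L²` norm
  exact ⟨a, fun i => (max_le (WithLp.norm_fst_le H₁ _) (WithLp.norm_snd_le H₁ _)).trans_lt (ha i)⟩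

/-- If `π₁`, `π₂` are disjoint representations of a C*-algebra (no nonzero bounded
intertwiners in either direction), then the orthogonal projection of `H₁ ⊕ H₂` onto `H₁`
lies in the strong-operator-topology closure of `(π₁ ⊕ π₂)(A)`: it can be approximated
on any finite set of vectors by operators `(π₁ ⊕ π₂)(a)`. -/
theorem stmt6 {A : Type*} [NormedRing A] [StarRing A] [CStarRing A] [NormedAlgebra ℂ A]
    {H₁ H₂ : Type*}
    [NormedAddCommGroup H₁] [InnerProductSpace ℂ H₁] [CompleteSpace H₁]
    [NormedAddCommGroup H₂] [InnerProductSpace ℂ H₂] [CompleteSpace H₂]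
    (π₁ : A →⋆ₐ[ℂ] (H₁ →L[ℂ] H₁)) (π₂ : A →⋆ₐ[ℂ] (H₂ →L[ℂ] H₂))
    (h₁₂ : ∀ T : H₁ →L[ℂ] H₂, (∀ a : A, T.comp (π₁ a) = (π₂ a).comp T) → T = 0)
    (h₂₁ : ∀ S : H₂ →L[ℂ] H₁, (∀ a : A, S.comp (π₂ a) = (π₁ a).comp S) → S = 0) :
    ∀ ε > (0 : ℝ), ∀ (n : ℕ) (ξ : Fin n → H₁ × H₂), ∃ a : A,
      ∀ i, ‖((π₁ a).prodMap (π₂ a)) (ξ i) -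
        ((ContinuousLinearMap.inl ℂ H₁ H₂).comp (ContinuousLinearMap.fst ℂ H₁ H₂)) (ξ i)‖
          < ε :=
  stmt6_general π₁ π₂ h₁₂ h₂₁
end

section
/- Let (M,τ) be a tracial von Neumann algebra and N ⊆ M a diffuse von Neumann subalgebra. Let u ∈ M be a unitary such that u*Nu ∩ N is diffuse. Then every bounded N-N bimodular map T : L²(NuN) → L²(N) ⊗ L²(N^op) is zero, where L²(NuN) is the ‖·‖₂-closure of the linear span of {xuy : x,y ∈ N} in L²(M,τ). -/
/-!
Put `ζ = T(uΩ)` and write `ι vₙ = u* (ι wₙ) u`. Then `uΩ · vₙ = wₙ · uΩ`, so bimodularity gives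
`ζ · vₙ = wₙ · ζ`, i.e. `‖ζ‖² = ⟪wₙ* ζ vₙ, ζ⟫` for every `n`. On elementary tensors of the coarse
bimodule, `⟪wₙ* (ξ ⊗ η) vₙ, ξ' ⊗ η'⟫ = ⟪wₙ* ξ, ξ'⟫ ⟪η vₙ, η'⟫`, and the second factor tends to `0`
because the trace turns right multiplication by `vₙ` into left multiplication, which tends weakly
to `0`. A uniformly bounded sequence of operators tending weakly to `0` on a total set does so
everywhere, hence `ζ = 0`; as `T` is bimodular and `{x u y Ω}` is total in `L²(NuN)`, `T = 0`.
-/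

open Filter MulOpposite Topology

theorem MulOpposite.op_mem_unitary {R : Type*} [Monoid R] [StarMul R] {u : R}
    (hu : u ∈ unitary R) : op u ∈ unitary Rᵐᵒᵖ :=
  Unitary.mem_iff.mpr ⟨by rw [← op_star, ← op_mul, Unitary.mul_star_self_of_mem hu, op_one],
    by rw [← op_star, ← op_mul, Unitary.star_mul_self_of_mem hu, op_one]⟩

theorem Unitary.mem_of_map_mem {R S F : Type*} [Monoid R] [StarMul R] [Monoid S] [StarMul S]
    [FunLike F R S] [StarHomClass F R S] [MonoidHomClass F R S] {f : F}
    (hf : Function.Injective f) {u : R} (hu : f u ∈ unitary S) : u ∈ unitary R := by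
  rw [Unitary.mem_iff] at hu ⊢
  constructor <;> apply hf
  · rw [map_mul, map_star, map_one, hu.1]
  · rw [map_mul, map_star, map_one, hu.2]

theorem Unitary.mul_eq_of_eq_star_mul_mul {R : Type*} [Monoid R] [StarMul R] {u x y : R}
    (hu : u ∈ unitary R) (h : x = star u * y * u) : u * x = y * u := by
  rw [h, ← mul_assoc, ← mul_assoc, Unitary.mul_star_self_of_mem hu, one_mul]

theorem Unitary.mem_of_map_eq_star_mul_mul {R S F : Type*} [Monoid R] [StarMul R] [Monoid S]
    [StarMul S] [FunLike F R S] [StarHomClass F R S] [MonoidHomClass F R S] {f : F}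
    (hf : Function.Injective f) {u : S} (hu : u ∈ unitary S) {v w : R} (hv : v ∈ unitary R)
    (h : f v = star u * f w * u) : w ∈ unitary R := by
  have hw : f w = u * f v * star u := by
    rw [Unitary.mul_eq_of_eq_star_mul_mul hu h, mul_assoc, Unitary.mul_star_self_of_mem hu, mul_one]
  exact Unitary.mem_of_map_mem hf
    (hw ▸ mul_mem (mul_mem hu (Unitary.map_mem f hv)) (Unitary.star_mem hu))

theorem ContinuousLinearMap.norm_le_one_of_mem_unitary {𝕜 H : Type*} [RCLike 𝕜]
    [NormedAddCommGroup H] [InnerProductSpace 𝕜 H] [CompleteSpace H] {U : H →L[𝕜] H}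
    (hU : U ∈ unitary (H →L[𝕜] H)) : ‖U‖ ≤ 1 :=
  U.opNorm_le_bound zero_le_one fun x ↦ by rw [U.norm_map_of_mem_unitary hU, one_mul]

section Density

variable {𝕜 𝕜₂ E F : Type*} [NontriviallyNormedField 𝕜] [NontriviallyNormedField 𝕜₂]
  {σ : 𝕜 →+* 𝕜₂} [RingHomIsometric σ]
  [NormedAddCommGroup E] [NormedSpace 𝕜 E] [NormedAddCommGroup F] [NormedSpace 𝕜₂ F]

theorem ContinuousLinearMap.tendsto_zero_of_dense_span {ι : Type*} {l : Filter ι}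
    {f : ι → E →SL[σ] F} (hf : ∃ C, ∀ i, ‖f i‖ ≤ C) {s : Set E}
    (hs : (Submodule.span 𝕜 s).topologicalClosure = ⊤)
    (h : ∀ z ∈ s, Tendsto (fun i ↦ f i z) l (𝓝 0)) (x : E) :
    Tendsto (fun i ↦ f i x) l (𝓝 0) := by
  let P : Submodule 𝕜 E :=
    { carrier := {x | Tendsto (fun i ↦ f i x) l (𝓝 0)}
      add_mem' := fun hx hy ↦ by simpa using hx.add hy
      zero_mem' := by simpa using tendsto_const_nhds
      smul_mem' := fun c x hx ↦ by simpa using hx.const_smul (σ c) }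
  have hequi : Equicontinuous ((↑) ∘ f) :=
    ((NormedSpace.equicontinuous_TFAE f).out 1 5).mpr hf
  have hP : IsClosed (P : Set E) :=
    hequi.isClosed_setOfPred_tendsto (f := fun _ ↦ 0) continuous_const
  have : ⊤ ≤ P := hs ▸ Submodule.topologicalClosure_minimal _ (Submodule.span_le.mpr h) hP
  exact this trivial

end Density

section Inner

variable {𝕜 E : Type*} [RCLike 𝕜] [NormedAddCommGroup E] [InnerProductSpace 𝕜 E]

theorem norm_innerSLFlip_le (y : E) : ‖innerSLFlip 𝕜 y‖ ≤ ‖y‖ :=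
  ContinuousLinearMap.opNorm_le_bound _ (norm_nonneg y) fun x ↦ by
    simpa [innerSLFlip_apply_apply, mul_comm] using norm_inner_le_norm x y

theorem tendsto_inner_zero_of_dense_span {ι : Type*} {l : Filter ι} {U : ι → E →L[𝕜] E}
    (hU : ∃ C, ∀ i, ‖U i‖ ≤ C) {s : Set E} (hs : (Submodule.span 𝕜 s).topologicalClosure = ⊤)
    (h : ∀ z ∈ s, ∀ z' ∈ s, Tendsto (fun i ↦ inner 𝕜 (U i z) z') l (𝓝 0)) (x y : E) :
    Tendsto (fun i ↦ inner 𝕜 (U i x) y) l (𝓝 0) := by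
  obtain ⟨C, hC⟩ := hU
  have hleft : ∀ z' ∈ s, ∀ x, Tendsto (fun i ↦ inner 𝕜 (U i x) z') l (𝓝 0) := fun z' hz' ↦
    ContinuousLinearMap.tendsto_zero_of_dense_span (f := fun i ↦ (innerSLFlip 𝕜 z').comp (U i))
      ⟨‖z'‖ * C, fun i ↦ by grw [ContinuousLinearMap.opNorm_comp_le, norm_innerSLFlip_le, hC i]⟩ hs
      (fun z hz ↦ h z hz z' hz')
  exact ContinuousLinearMap.tendsto_zero_of_dense_span (f := fun i ↦ innerSL 𝕜 (U i x))
    ⟨C * ‖x‖, fun i ↦ by grw [innerSL_apply_norm, ContinuousLinearMap.le_opNorm, hC i]⟩ hs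
    (fun z' hz' ↦ hleft z' hz' x) y

end Inner

theorem ContinuousLinearMap.eq_zero_of_apply_eq_zero_of_mem_span {𝕜 F G : Type*}
    [NontriviallyNormedField 𝕜] [NormedAddCommGroup F] [NormedSpace 𝕜 F]
    [NormedAddCommGroup G] [NormedSpace 𝕜 G] {s : Set F} {S : Submodule 𝕜 F}
    (hS : S = (Submodule.span 𝕜 s).topologicalClosure) (T : S →L[𝕜] G)
    (hT : ∀ x : S, (x : F) ∈ s → T x = 0) : T = 0 := by
  have hsS : s ⊆ S := hS ▸ Submodule.subset_span.trans (Submodule.le_topologicalClosure _)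
  have hdense : Dense (Submodule.span 𝕜 ((↑) ⁻¹' s : Set S) : Set S) := by
    refine Subtype.dense_iff.mpr ?_
    change (S : Set F) ⊆ closure (S.subtype '' _)
    rw [← Submodule.map_coe, Submodule.map_span, Submodule.coe_subtype,
      Set.image_preimage_eq_inter_range, Subtype.range_coe, Set.inter_eq_left.mpr hsS,
      ← Submodule.topologicalClosure_coe, ← hS]
  exact ContinuousLinearMap.ext_on hdense hT

section StandardForm

variable {B H : Type*} [Ring B] [StarRing B] [Algebra ℂ B]
  [NormedAddCommGroup H] [InnerProductSpace ℂ H] [CompleteSpace H]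
  {L : B →⋆ₐ[ℂ] (H →L[ℂ] H)} {R : Bᵐᵒᵖ →⋆ₐ[ℂ] (H →L[ℂ] H)} {Ω : H}

theorem rightAction_leftAction_apply
    (hLR : ∀ (x : B) (y : Bᵐᵒᵖ), (L x).comp (R y) = (R y).comp (L x))
    (htrvec : ∀ b : B, L b Ω = R (op b) Ω) (b c : B) :
    R (op c) (L b Ω) = L (b * c) Ω := by
  rw [← ContinuousLinearMap.comp_apply, ← hLR, ContinuousLinearMap.comp_apply, ← htrvec, map_mul]
  rfl

theorem inner_map_apply_map_apply (b b' : B) (ξ η : H) :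
    inner ℂ (L b ξ) (L b' η) = inner ℂ (L (star b' * b) ξ) η := by
  rw [map_mul, map_star, ContinuousLinearMap.star_eq_adjoint, mul_apply_eq_comp,
    ContinuousLinearMap.adjoint_inner_left]

theorem tendsto_inner_rightAction_zero
    (hcyc : (Submodule.span ℂ {ξ : H | ∃ b : B, ξ = L b Ω}).topologicalClosure = ⊤)
    (hLR : ∀ (x : B) (y : Bᵐᵒᵖ), (L x).comp (R y) = (R y).comp (L x))
    (htrvec : ∀ b : B, L b Ω = R (op b) Ω)
    (htrace : ∀ x y : B, inner ℂ (L (x * y) Ω) Ω = inner ℂ (L (y * x) Ω) Ω)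
    {κ : Type*} {l : Filter κ} {c : κ → B} (hc : ∀ i, c i ∈ unitary B)
    (hweak : ∀ ξ, Tendsto (fun i ↦ inner ℂ (L (c i) ξ) Ω) l (𝓝 0)) (ξ η : H) :
    Tendsto (fun i ↦ inner ℂ (R (op (c i)) ξ) η) l (𝓝 0) := by
  refine tendsto_inner_zero_of_dense_span ⟨1, fun i ↦
    ContinuousLinearMap.norm_le_one_of_mem_unitary (Unitary.map_mem R (op_mem_unitary (hc i)))⟩
    hcyc ?_ ξ η
  rintro _ ⟨b, rfl⟩ _ ⟨b', rfl⟩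
  simp_rw [rightAction_leftAction_apply hLR htrvec, inner_map_apply_map_apply, ← mul_assoc,
    htrace _ (c _), map_mul]
  exact hweak _

end StandardForm

section CoarseBimodule

variable {A B H E : Type*} [Ring A] [StarRing A] [Algebra ℂ A]
  [Ring B] [StarRing B] [Algebra ℂ B]
  [NormedAddCommGroup H] [InnerProductSpace ℂ H] [CompleteSpace H]
  [NormedAddCommGroup E] [InnerProductSpace ℂ E] [CompleteSpace E]
  {ι : A →⋆ₐ[ℂ] B} {L : B →⋆ₐ[ℂ] (H →L[ℂ] H)} {R : Bᵐᵒᵖ →⋆ₐ[ℂ] (H →L[ℂ] H)}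
  {K : Submodule ℂ H} {hKL : ∀ (a : A) (ξ : H), ξ ∈ K → L (ι a) ξ ∈ K}
  {hKR : ∀ (a : A) (ξ : H), ξ ∈ K → R (op (ι a)) ξ ∈ K} {t : K → K → E}
  {Lc : A →⋆ₐ[ℂ] (E →L[ℂ] E)} {Rc : Aᵐᵒᵖ →⋆ₐ[ℂ] (E →L[ℂ] E)}


theorem tendsto_inner_coarse_zero
    (htinner : ∀ ξ ξ' η η' : K,
      inner ℂ (t ξ η) (t ξ' η') = inner ℂ (ξ : H) (ξ' : H) * inner ℂ (η : H) (η' : H))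
    (htdense : (Submodule.span ℂ {z : E | ∃ ξ η, z = t ξ η}).topologicalClosure = ⊤)
    (hLc : ∀ (a : A) (ξ η : K), Lc a (t ξ η) = t ⟨L (ι a) ξ, hKL a ξ ξ.2⟩ η)
    (hRc : ∀ (a : A) (ξ η : K), Rc (op a) (t ξ η) = t ξ ⟨R (op (ι a)) η, hKR a η η.2⟩)
    {κ : Type*} {l : Filter κ} {a b : κ → A} (ha : ∀ i, a i ∈ unitary A)
    (hb : ∀ i, b i ∈ unitary A)
    (hR : ∀ η η' : H, Tendsto (fun i ↦ inner ℂ (R (op (ι (b i))) η) η') l (𝓝 0)) (ζ ζ' : E) :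
    Tendsto (fun i ↦ inner ℂ (Lc (a i) (Rc (op (b i)) ζ)) ζ') l (𝓝 0) := by
  have hU i : Lc (a i) * Rc (op (b i)) ∈ unitary (E →L[ℂ] E) :=
    mul_mem (Unitary.map_mem Lc (ha i)) (Unitary.map_mem Rc (op_mem_unitary (hb i)))
  refine tendsto_inner_zero_of_dense_span (U := fun i ↦ Lc (a i) * Rc (op (b i)))
    ⟨1, fun i ↦ ContinuousLinearMap.norm_le_one_of_mem_unitary (hU i)⟩ htdense ?_ ζ ζ'
  rintro _ ⟨ξ, η, rfl⟩ _ ⟨ξ', η', rfl⟩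
  simp_rw [mul_apply_eq_comp, hRc, hLc, htinner]
  refine isBoundedUnder_le_mul_tendsto_zero
    (isBoundedUnder_of ⟨‖(ξ : H)‖ * ‖(ξ' : H)‖, fun i ↦ ?_⟩) (hR η η')
  grw [Function.comp_apply, norm_inner_le_norm, ContinuousLinearMap.norm_map_of_mem_unitary
    (Unitary.map_mem L (Unitary.map_mem ι (ha i)))]

end CoarseBimodule

/-- Modeling: `B` plays `M` and `A` plays `N`, embedded by `ι`; `M` acts on `H = L²(M,τ)` by
the commuting left and right actions `L`, `R` with cyclic trace vector `Ω`. Diffuseness of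
`u*Nu ∩ N` is encoded by a sequence of unitaries `v n ∈ N ∩ u*Nu` tending weakly to `0`, and
`t ξ η` stands for `ξ ⊗ η`. -/
theorem stmt10_general {A B H E : Type*}
    [NormedRing A] [StarRing A] [NormedAlgebra ℂ A]
    [NormedRing B] [StarRing B] [NormedAlgebra ℂ B]
    [NormedAddCommGroup H] [InnerProductSpace ℂ H] [CompleteSpace H]
    [NormedAddCommGroup E] [InnerProductSpace ℂ E] [CompleteSpace E]
    (ι : A →⋆ₐ[ℂ] B) (hι : Function.Injective ι)
    (L : B →⋆ₐ[ℂ] (H →L[ℂ] H)) (R : Bᵐᵒᵖ →⋆ₐ[ℂ] (H →L[ℂ] H))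
    (hLR : ∀ (x : B) (y : Bᵐᵒᵖ), (L x).comp (R y) = (R y).comp (L x))
    (Ω : H)
    (hcyc : (Submodule.span ℂ {ξ : H | ∃ b : B, ξ = L b Ω}).topologicalClosure = ⊤)
    (htrvec : ∀ b : B, L b Ω = R (op b) Ω)
    (htrace : ∀ x y : B, (inner ℂ (L (x * y) Ω) Ω : ℂ) = (inner ℂ (L (y * x) Ω) Ω : ℂ))
    (u : B) (hu : u ∈ unitary B)
    (hdiff : ∃ v : ℕ → A, (∀ n, v n ∈ unitary A) ∧
      (∀ n, ∃ w : A, ι (v n) = star u * ι w * u) ∧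
      (∀ ξ η : H, Tendsto (fun n => (inner ℂ (L (ι (v n)) ξ) η : ℂ)) atTop (nhds 0)))
    -- `K = L²(N)`:
    (K : Submodule ℂ H)
    (hKL : ∀ (a : A) (ξ : H), ξ ∈ K → L (ι a) ξ ∈ K)
    (hKR : ∀ (a : A) (ξ : H), ξ ∈ K → R (op (ι a)) ξ ∈ K)
    -- the coarse bimodule `E = L²(N) ⊗ L²(N^op)`:
    (t : K → K → E)
    (htinner : ∀ ξ ξ' η η' : K,
      (inner ℂ (t ξ η) (t ξ' η') : ℂ) = (inner ℂ (ξ : H) (ξ' : H) : ℂ) * (inner ℂ (η : H) (η' : H) : ℂ))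
    (htdense : (Submodule.span ℂ {z : E | ∃ ξ η, z = t ξ η}).topologicalClosure = ⊤)
    (Lc : A →⋆ₐ[ℂ] (E →L[ℂ] E)) (Rc : Aᵐᵒᵖ →⋆ₐ[ℂ] (E →L[ℂ] E))
    (hLc : ∀ (a : A) (ξ η : K), Lc a (t ξ η) = t ⟨L (ι a) ξ, hKL a ξ ξ.2⟩ η)
    (hRc : ∀ (a : A) (ξ η : K), Rc (op a) (t ξ η) = t ξ ⟨R (op (ι a)) η, hKR a η η.2⟩)
    -- `S = L²(NuN)`:
    (S : Submodule ℂ H)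
    (hS : S = (Submodule.span ℂ
      {ξ : H | ∃ x y : A, ξ = L (ι x) (R (op (ι y)) (L u Ω))}).topologicalClosure)
    (hSL : ∀ (a : A) (ξ : H), ξ ∈ S → L (ι a) ξ ∈ S)
    (hSR : ∀ (a : A) (ξ : H), ξ ∈ S → R (op (ι a)) ξ ∈ S) :
    ∀ T : S →L[ℂ] E,
      (∀ (a : A) (ξ : S), T ⟨L (ι a) ξ, hSL a ξ ξ.2⟩ = Lc a (T ξ)) →
      (∀ (a : A) (ξ : S), T ⟨R (op (ι a)) ξ, hSR a ξ ξ.2⟩ = Rc (op a) (T ξ)) →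
      T = 0 := by
  intro T hTL hTR
  obtain ⟨v, hvU, hvw, hvweak⟩ := hdiff
  choose w hw using hvw
  have hwU n : w n ∈ unitary A := Unitary.mem_of_map_eq_star_mul_mul hι hu (hvU n) (hw n)
  have hξ₀ : L u Ω ∈ S :=
    hS ▸ Submodule.le_topologicalClosure _ (Submodule.subset_span ⟨1, 1, by simp⟩)
  set ζ := T ⟨L u Ω, hξ₀⟩
  have hfix n : Lc (star (w n)) (Rc (op (v n)) ζ) = ζ := by
    have hkey : R (op (ι (v n))) (L u Ω) = L (ι (w n)) (L u Ω) := by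
      rw [rightAction_leftAction_apply hLR htrvec, Unitary.mul_eq_of_eq_star_mul_mul hu (hw n),
        map_mul]
      rfl
    have hvw : Rc (op (v n)) ζ = Lc (w n) ζ := by
      rw [← hTR, ← hTL]
      exact congrArg T (Subtype.ext hkey)
    rw [hvw, ← mul_apply_eq_comp, ← map_mul, Unitary.star_mul_self_of_mem (hwU n), map_one,
      one_apply_eq_self]
  have hζ : ζ = 0 := by
    have hlim := tendsto_inner_coarse_zero htinner htdense hLc hRc
      (fun n ↦ Unitary.star_mem (hwU n)) hvU
      (tendsto_inner_rightAction_zero hcyc hLR htrvec htrace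
        (fun n ↦ Unitary.map_mem ι (hvU n)) (fun ξ ↦ hvweak ξ Ω)) ζ ζ
    simp_rw [hfix] at hlim
    exact inner_self_eq_zero.mp (tendsto_nhds_unique tendsto_const_nhds hlim)
  refine ContinuousLinearMap.eq_zero_of_apply_eq_zero_of_mem_span hS T ?_
  rintro ⟨_, hx⟩ ⟨a, b, rfl⟩
  calc T ⟨_, hx⟩ = Lc a (Rc (op b) ζ) := by rw [← hTR b, ← hTL a]
    _ = 0 := by rw [hζ, map_zero, map_zero]

/-- Let `(M,τ)` be a tracial von Neumann algebra, `N ⊆ M` a diffuse subalgebra, and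
`u ∈ M` a unitary with `u*Nu ∩ N` diffuse.  Then every bounded `N`-`N` bimodular map
`T : L²(NuN) → L²(N) ⊗ L²(N^op)` is zero.

Modeling: `B` is a C*-algebra (`M`) with a unital injective embedding `ι : A → B` of the
subalgebra `N = A`; `M` acts on `H = L²(M,τ)` by commuting left/right actions `L`, `R`
with cyclic trace vector `Ω`.  Diffuseness of `u*Nu ∩ N` is encoded by a sequence of
unitaries `v n ∈ N ∩ u*Nu` tending to `0` in the weak operator topology.  `K = L²(N)` is
the closure of `NΩ`, `S = L²(NuN)` the closed span of `{x u y Ω : x,y ∈ N}`, and `E`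
with `t : K → K → E` is the coarse bimodule `L²(N) ⊗ L²(N^op)`. -/
theorem stmt10 {A B H E : Type*}
    [NormedRing A] [StarRing A] [CStarRing A] [NormedAlgebra ℂ A]
    [NormedRing B] [StarRing B] [CStarRing B] [NormedAlgebra ℂ B]
    [NormedAddCommGroup H] [InnerProductSpace ℂ H] [CompleteSpace H]
    [NormedAddCommGroup E] [InnerProductSpace ℂ E] [CompleteSpace E]
    (ι : A →⋆ₐ[ℂ] B) (hι : Function.Injective ι)
    (L : B →⋆ₐ[ℂ] (H →L[ℂ] H)) (R : Bᵐᵒᵖ →⋆ₐ[ℂ] (H →L[ℂ] H))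
    (hLR : ∀ (x : B) (y : Bᵐᵒᵖ), (L x).comp (R y) = (R y).comp (L x))
    (Ω : H)
    (hcyc : (Submodule.span ℂ {ξ : H | ∃ b : B, ξ = L b Ω}).topologicalClosure = ⊤)
    (htrvec : ∀ b : B, L b Ω = R (op b) Ω)
    (htrace : ∀ x y : B, (inner ℂ (L (x * y) Ω) Ω : ℂ) = (inner ℂ (L (y * x) Ω) Ω : ℂ))
    (u : B) (hu : u ∈ unitary B)
    (hdiff : ∃ v : ℕ → A, (∀ n, v n ∈ unitary A) ∧
      (∀ n, ∃ w : A, ι (v n) = star u * ι w * u) ∧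
      (∀ ξ η : H, Tendsto (fun n => (inner ℂ (L (ι (v n)) ξ) η : ℂ)) atTop (nhds 0)))
    -- `K = L²(N)`:
    (K : Submodule ℂ H)
    (hK : K = (Submodule.span ℂ {ξ : H | ∃ a : A, ξ = L (ι a) Ω}).topologicalClosure)
    (hKL : ∀ (a : A) (ξ : H), ξ ∈ K → L (ι a) ξ ∈ K)
    (hKR : ∀ (a : A) (ξ : H), ξ ∈ K → R (op (ι a)) ξ ∈ K)
    -- the coarse bimodule `E = L²(N) ⊗ L²(N^op)`:
    (t : K → K → E)
    (htinner : ∀ ξ ξ' η η' : K,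
      (inner ℂ (t ξ η) (t ξ' η') : ℂ) = (inner ℂ (ξ : H) (ξ' : H) : ℂ) * (inner ℂ (η : H) (η' : H) : ℂ))
    (htdense : (Submodule.span ℂ {z : E | ∃ ξ η, z = t ξ η}).topologicalClosure = ⊤)
    (Lc : A →⋆ₐ[ℂ] (E →L[ℂ] E)) (Rc : Aᵐᵒᵖ →⋆ₐ[ℂ] (E →L[ℂ] E))
    (hLc : ∀ (a : A) (ξ η : K), Lc a (t ξ η) = t ⟨L (ι a) ξ, hKL a ξ ξ.2⟩ η)
    (hRc : ∀ (a : A) (ξ η : K), Rc (op a) (t ξ η) = t ξ ⟨R (op (ι a)) η, hKR a η η.2⟩)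
    -- `S = L²(NuN)`:
    (S : Submodule ℂ H)
    (hS : S = (Submodule.span ℂ
      {ξ : H | ∃ x y : A, ξ = L (ι x) (R (op (ι y)) (L u Ω))}).topologicalClosure)
    (hSL : ∀ (a : A) (ξ : H), ξ ∈ S → L (ι a) ξ ∈ S)
    (hSR : ∀ (a : A) (ξ : H), ξ ∈ S → R (op (ι a)) ξ ∈ S) :
    ∀ T : S →L[ℂ] E,
      (∀ (a : A) (ξ : S), T ⟨L (ι a) ξ, hSL a ξ ξ.2⟩ = Lc a (T ξ)) →
      (∀ (a : A) (ξ : S), T ⟨R (op (ι a)) ξ, hSR a ξ ξ.2⟩ = Rc (op a) (T ξ)) →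
      T = 0 :=
  stmt10_general ι hι L R hLR Ω hcyc htrvec htrace u hu hdiff K hKL hKR t htinner htdense Lc Rc hLc
    hRc S hS hSL hSR
end

section
/- Let k ≥ 1, let T, Y ∈ M_k(ℂ), ε > 0, and set R = ‖Y‖_∞. Suppose Q ∈ M_k(ℂ) is an orthogonal projection with ‖Q(T−Y)‖_∞ ≤ ε and tr(1−Q) ≤ ε (normalized trace). Then there exists an orthogonal projection P ∈ M_k(ℂ) with P ≤ χ_{[0,R+ε]}(|T*|), tr(1−P) ≤ 2ε, and ‖P(T−Y)‖_∞ ≤ ε. -/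
open Matrix
open scoped Matrix.Norms.L2Operator ComplexOrder

/-- The spectral projection `χ_E(A)` of a Hermitian matrix `A` for a Borel set `E ⊆ ℝ`. -/
noncomputable def specProj {k : ℕ} {A : Matrix (Fin k) (Fin k) ℂ} (hA : A.IsHermitian)
    (E : Set ℝ) : Matrix (Fin k) (Fin k) ℂ :=
  (hA.eigenvectorUnitary : Matrix (Fin k) (Fin k) ℂ) *
    Matrix.diagonal (fun i => Set.indicator E (fun _ => (1 : ℂ)) (hA.eigenvalues i)) *
    star (hA.eigenvectorUnitary : Matrix (Fin k) (Fin k) ℂ)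

/-- The normalized trace on `M_k(ℂ)` (`tr(1) = 1`), real part. -/
noncomputable def normTraceR {k : ℕ} (A : Matrix (Fin k) (Fin k) ℂ) : ℝ :=
  (A.trace).re / k

/-!
Take for `P` the orthogonal projection onto `ran Q ∩ ran χ_{[0,R+ε]}(|T*|)`. Since `P ≤ Q`,
`‖P(T−Y)‖ = ‖PQ(T−Y)‖ ≤ ε`. The point is that `ran Q` meets `ker χ_{[0,R+ε]}(|T*|)` only in `0`:
for `ξ = Qξ` we have `‖T*ξ‖ ≤ ‖(Q(T−Y))*ξ‖ + ‖Y*ξ‖ ≤ (ε + R)‖ξ‖`, while `|T*|` exceeds `R + ε`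
strictly on that kernel and `‖|T*|ξ‖ = ‖T*ξ‖`. Hence `rank χ_{[0,R+ε]}(|T*|) ≥ rank Q`, and the
dimension formula for intersections gives `k − rank P ≤ 2 (k − rank Q)`.
-/

open Module LinearMap
open scoped InnerProductSpace

theorem OrthonormalBasis.repr_apply_of_forall_apply_eq_smul {ι 𝕜 E : Type*} [RCLike 𝕜]
    [NormedAddCommGroup E] [InnerProductSpace 𝕜 E] [Fintype ι] (b : OrthonormalBasis ι 𝕜 E)
    {f : E →ₗ[𝕜] E} {d : ι → 𝕜} (hf : ∀ j, f (b j) = d j • b j) (x : E) (i : ι) :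
    b.repr (f x) i = d i * b.repr x i := by
  classical
  conv_lhs => rw [← b.sum_repr x]
  simp [hf, smul_smul, b.repr_self, Pi.single_apply, mul_comm]

theorem LinearMap.finrank_le_finrank_range_of_disjoint_ker {K V V₂ : Type*} [DivisionRing K]
    [AddCommGroup V] [Module K V] [FiniteDimensional K V] [AddCommGroup V₂] [Module K V₂]
    {f : V →ₗ[K] V₂} {U : Submodule K V} (h : Disjoint (ker f) U) :
    finrank K U ≤ finrank K (range f) := by
  have := Submodule.finrank_add_finrank_le_of_disjoint h
  have := f.finrank_range_add_finrank_ker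
  omega

theorem Submodule.two_mul_finrank_le_finrank_inf_add_finrank {K V : Type*} [DivisionRing K]
    [AddCommGroup V] [Module K V] [FiniteDimensional K V] {U U' : Submodule K V}
    (h : finrank K U ≤ finrank K U') : 2 * finrank K U ≤ finrank K ↥(U ⊓ U') + finrank K V := by
  have := Submodule.finrank_sup_add_finrank_inf_eq U U'
  have := Submodule.finrank_le (U ⊔ U')
  omega

namespace Matrix

variable {𝕜 : Type*} [RCLike 𝕜] {n : Type*} [Fintype n] [DecidableEq n]

theorem toEuclideanLin_mul_apply (A B : Matrix n n 𝕜) (x : EuclideanSpace 𝕜 n) :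
    toEuclideanLin (A * B) x = toEuclideanLin A (toEuclideanLin B x) := by
  rw [← coe_toEuclideanCLM_eq_toEuclideanLin, map_mul]
  rfl

theorem isIdempotentElem_toEuclideanLin {A : Matrix n n 𝕜} (hA : IsIdempotentElem A) :
    IsIdempotentElem (toEuclideanLin A) := by
  rw [toEuclideanLin_eq_toLin_orthonormal]
  exact hA.map (toLinAlgEquiv (EuclideanSpace.basisFun n 𝕜).toBasis)

theorem trace_eq_finrank_range_toEuclideanLin {A : Matrix n n 𝕜} (hA : IsIdempotentElem A) :
    A.trace = finrank 𝕜 (range (toEuclideanLin A)) := by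
  rw [← (isIdempotentElem_toEuclideanLin hA).isProj_range.trace,
    toEuclideanLin_eq_toLin_orthonormal, trace_toLin_eq]

theorem mul_eq_self_of_range_toEuclideanLin_le {E P : Matrix n n 𝕜} (hE : IsIdempotentElem E)
    (h : range (toEuclideanLin P) ≤ range (toEuclideanLin E)) : E * P = P :=
  toEuclideanLin.injective <| LinearMap.ext fun x => by
    rw [toEuclideanLin_mul_apply, ← (isIdempotentElem_toEuclideanLin hE).mem_range_iff]
    exact h (mem_range_self _ x)

theorem range_toLin'_le_of_mul_eq {R : Type*} [CommSemiring R] {E P : Matrix n n R}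
    (h : E * P = P) : range (toLin' P) ≤ range (toLin' E) := by
  rw [← h, toLin'_mul]
  exact range_comp_le_range _ _

theorem norm_conjTranspose_toEuclideanLin_le {Q T Y : Matrix n n 𝕜} (hQ : Q.IsHermitian)
    {x : EuclideanSpace 𝕜 n} (hx : toEuclideanLin Q x = x) :
    ‖toEuclideanLin Tᴴ x‖ ≤ (‖Q * (T - Y)‖ + ‖Y‖) * ‖x‖ := by
  have hsplit : toEuclideanLin Tᴴ x = toEuclideanLin (Q * (T - Y))ᴴ x + toEuclideanLin Yᴴ x := by
    rw [conjTranspose_mul, hQ.eq, toEuclideanLin_mul_apply, hx, conjTranspose_sub, map_sub,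
      LinearMap.sub_apply, sub_add_cancel]
  calc ‖toEuclideanLin Tᴴ x‖
      ≤ ‖toEuclideanLin (Q * (T - Y))ᴴ x‖ + ‖toEuclideanLin Yᴴ x‖ := hsplit ▸ norm_add_le _ _
    _ ≤ ‖(Q * (T - Y))ᴴ‖ * ‖x‖ + ‖Yᴴ‖ * ‖x‖ :=
      add_le_add (l2_opNorm_mulVec _ x) (l2_opNorm_mulVec _ x)
    _ = (‖Q * (T - Y)‖ + ‖Y‖) * ‖x‖ := by
      rw [l2_opNorm_conjTranspose, l2_opNorm_conjTranspose, add_mul]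

theorem norm_toEuclideanLin_eq_of_conjTranspose_mul_self_eq {A C : Matrix n n 𝕜}
    (h : Aᴴ * A = Cᴴ * C) (x : EuclideanSpace 𝕜 n) :
    ‖toEuclideanLin A x‖ = ‖toEuclideanLin C x‖ := by
  have hsq : ∀ M : Matrix n n 𝕜,
      ‖toEuclideanLin M x‖ ^ 2 = RCLike.re ⟪toEuclideanLin (Mᴴ * M) x, x⟫_𝕜 := fun M => by
    rw [← coe_toEuclideanCLM_eq_toEuclideanLin, ← coe_toEuclideanCLM_eq_toEuclideanLin,
      ← star_eq_conjTranspose, map_mul, map_star]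
    exact ContinuousLinearMap.apply_norm_sq_eq_inner_adjoint_left _ x
  rw [← sq_eq_sq₀ (norm_nonneg _) (norm_nonneg _), hsq, hsq, h]

theorem IsHermitian.toEuclideanLin_eigenvectorBasis {A : Matrix n n 𝕜} (hA : A.IsHermitian)
    (j : n) : toEuclideanLin A (hA.eigenvectorBasis j) =
      (hA.eigenvalues j : 𝕜) • hA.eigenvectorBasis j := by
  rw [toLpLin_apply, hA.mulVec_eigenvectorBasis, ← RCLike.real_smul_eq_coe_smul (K := 𝕜)]
  rfl

end Matrix

namespace Submodule

variable {𝕜 : Type*} [RCLike 𝕜] {n : Type*} [Fintype n] [DecidableEq n]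
  (W : Submodule 𝕜 (EuclideanSpace 𝕜 n))

noncomputable def starProjectionMatrix : Matrix n n 𝕜 :=
  (Matrix.toEuclideanCLM (𝕜 := 𝕜) (n := n)).symm W.starProjection

theorem toEuclideanCLM_starProjectionMatrix :
    Matrix.toEuclideanCLM (𝕜 := 𝕜) (n := n) W.starProjectionMatrix = W.starProjection :=
  StarAlgEquiv.apply_symm_apply _ _

theorem isStarProjection_starProjectionMatrix : IsStarProjection W.starProjectionMatrix :=
  isStarProjection_starProjection.map (Matrix.toEuclideanCLM (𝕜 := 𝕜) (n := n)).symm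

theorem range_toEuclideanLin_starProjectionMatrix :
    range (Matrix.toEuclideanLin W.starProjectionMatrix) = W := by
  rw [← Matrix.coe_toEuclideanCLM_eq_toEuclideanLin, toEuclideanCLM_starProjectionMatrix,
    range_starProjection]

theorem norm_starProjectionMatrix_le : ‖W.starProjectionMatrix‖ ≤ 1 := by
  rw [Matrix.cstar_norm_def, toEuclideanCLM_starProjectionMatrix]
  exact starProjection_norm_le W

end Submodule

namespace Matrix

section specProj

variable {k : ℕ} {A : Matrix (Fin k) (Fin k) ℂ} (hA : A.IsHermitian)

theorem IsHermitian.isIdempotentElem_specProj (S : Set ℝ) : IsIdempotentElem (specProj hA S) := by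
  have hD : IsIdempotentElem
      (diagonal fun i => S.indicator (fun _ => (1 : ℂ)) (hA.eigenvalues i)) := by
    rw [IsIdempotentElem, diagonal_mul_diagonal]
    congr 1
    ext i
    by_cases h : hA.eigenvalues i ∈ S <;> simp [h]
  simpa [specProj] using hD.map (Unitary.conjStarAlgAut ℂ _ hA.eigenvectorUnitary)

theorem IsHermitian.toEuclideanLin_specProj_eigenvectorBasis (S : Set ℝ) (j : Fin k) :
    toEuclideanLin (specProj hA S) (hA.eigenvectorBasis j) =
      S.indicator (fun _ => (1 : ℂ)) (hA.eigenvalues j) • hA.eigenvectorBasis j := by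
  rw [toLpLin_apply, specProj, ← mulVec_mulVec, ← mulVec_mulVec,
    hA.star_eigenvectorUnitary_mulVec, diagonal_mulVec_single]
  ext i
  simp [mulVec_single, mul_comm]

theorem IsHermitian.mul_norm_sq_lt_re_inner_of_specProj_eq_zero {S : Set ℝ} {c : ℝ}
    (hS : ∀ i, hA.eigenvalues i ∉ S → c < hA.eigenvalues i) {ξ : EuclideanSpace ℂ (Fin k)}
    (hξ : ξ ≠ 0) (hSξ : toEuclideanLin (specProj hA S) ξ = 0) :
    c * ‖ξ‖ ^ 2 < RCLike.re ⟪ξ, toEuclideanLin A ξ⟫_ℂ := by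
  set b := hA.eigenvectorBasis
  set x := b.repr ξ
  have hx : ∀ i, x i ≠ 0 → c < hA.eigenvalues i := fun i hi => hS i fun hmem => hi <| by
    simpa [hmem, b.repr_apply_of_forall_apply_eq_smul
      (hA.toEuclideanLin_specProj_eigenvectorBasis S)] using congr(b.repr $hSξ i)
  obtain ⟨i₀, hi₀⟩ : ∃ i, x i ≠ 0 := by
    by_contra! h
    exact hξ (b.repr.map_eq_zero_iff.mp (by ext i; exact h i))
  have hnorm : ‖ξ‖ ^ 2 = ∑ i, ‖x i‖ ^ 2 := by
    rw [← b.repr.norm_map, EuclideanSpace.norm_sq_eq]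
  have hinner : RCLike.re ⟪ξ, toEuclideanLin A ξ⟫_ℂ = ∑ i, hA.eigenvalues i * ‖x i‖ ^ 2 := by
    rw [← b.repr.inner_map_map, PiLp.inner_apply, map_sum]
    refine Finset.sum_congr rfl fun i _ => ?_
    rw [b.repr_apply_of_forall_apply_eq_smul hA.toEuclideanLin_eigenvectorBasis, RCLike.inner_apply,
      mul_assoc, RCLike.mul_conj, RCLike.re_ofReal_mul, ← RCLike.ofReal_pow, RCLike.ofReal_re]
  rw [hnorm, hinner, Finset.mul_sum]
  refine Finset.sum_lt_sum (fun i _ => ?_) ⟨i₀, Finset.mem_univ _, ?_⟩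
  · by_cases hi : x i = 0
    · simp [hi]
    · exact mul_le_mul_of_nonneg_right (hx i hi).le (by positivity)
  · exact mul_lt_mul_of_pos_right (hx i₀ hi₀) (by positivity)

end specProj

variable {k : ℕ}

theorem normTraceR_one_sub_of_isIdempotentElem {A : Matrix (Fin k) (Fin k) ℂ}
    (hA : IsIdempotentElem A) :
    normTraceR (1 - A) = (k - finrank ℂ (range (toEuclideanLin A))) / k := by
  simp [normTraceR, trace_sub, trace_eq_finrank_range_toEuclideanLin hA]

theorem normTraceR_one_sub_le_two_mul {P Q E : Matrix (Fin k) (Fin k) ℂ}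
    (hP : IsIdempotentElem P) (hQ : IsIdempotentElem Q)
    (hPQE : range (toEuclideanLin P) = range (toEuclideanLin Q) ⊓ range (toEuclideanLin E))
    (hQE : Disjoint (ker (toEuclideanLin E)) (range (toEuclideanLin Q))) :
    normTraceR (1 - P) ≤ 2 * normTraceR (1 - Q) := by
  have hdim := Submodule.two_mul_finrank_le_finrank_inf_add_finrank
    (finrank_le_finrank_range_of_disjoint_ker hQE)
  rw [← hPQE, finrank_euclideanSpace_fin] at hdim
  rw [normTraceR_one_sub_of_isIdempotentElem hP, normTraceR_one_sub_of_isIdempotentElem hQ,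
    ← mul_div_assoc]
  refine div_le_div_of_nonneg_right ?_ k.cast_nonneg
  have : (2 * finrank ℂ (range (toEuclideanLin Q)) : ℝ) ≤
      finrank ℂ (range (toEuclideanLin P)) + k := by exact_mod_cast hdim
  linarith

theorem disjoint_ker_specProj_range {T Y Q B : Matrix (Fin k) (Fin k) ℂ} {c : ℝ}
    (hQ : IsStarProjection Q) (hc : ‖Q * (T - Y)‖ + ‖Y‖ ≤ c) (hB : B.PosSemidef)
    (hBT : B * B = T * Tᴴ) :
    Disjoint (ker (toEuclideanLin (specProj hB.isHermitian (Set.Icc 0 c))))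
      (range (toEuclideanLin Q)) := by
  rw [Submodule.disjoint_def]
  intro ξ hker hran
  by_contra hξ
  have hQξ : toEuclideanLin Q ξ = ξ :=
    (isIdempotentElem_toEuclideanLin hQ.isIdempotentElem).mem_range_iff.mp hran
  have hlower := hB.isHermitian.mul_norm_sq_lt_re_inner_of_specProj_eq_zero
    (fun i hi => by simpa [hB.eigenvalues_nonneg i] using hi) hξ hker
  have hBξ : ‖toEuclideanLin B ξ‖ = ‖toEuclideanLin Tᴴ ξ‖ :=
    norm_toEuclideanLin_eq_of_conjTranspose_mul_self_eq
      (by rw [hB.isHermitian.eq, hBT, conjTranspose_conjTranspose]) ξ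
  have hupper := norm_conjTranspose_toEuclideanLin_le (T := T) (Y := Y) hQ.isSelfAdjoint hQξ
  have key : c * ‖ξ‖ ^ 2 < c * ‖ξ‖ ^ 2 := calc
    c * ‖ξ‖ ^ 2 < RCLike.re ⟪ξ, toEuclideanLin B ξ⟫_ℂ := hlower
    _ ≤ ‖ξ‖ * ‖toEuclideanLin Tᴴ ξ‖ := hBξ ▸ re_inner_le_norm ξ _
    _ ≤ ‖ξ‖ * ((‖Q * (T - Y)‖ + ‖Y‖) * ‖ξ‖) := by gcongr
    _ ≤ c * ‖ξ‖ ^ 2 := by rw [mul_comm, mul_assoc, ← sq]; gcongr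
  exact key.false

end Matrix

theorem stmt11_general (k : ℕ) (T Y : Matrix (Fin k) (Fin k) ℂ) (ε : ℝ)
    (Q : Matrix (Fin k) (Fin k) ℂ) (hQher : Q.IsHermitian) (hQidem : Q * Q = Q)
    (hQT : ‖Q * (T - Y)‖ ≤ ε) (hQtr : normTraceR (1 - Q) ≤ ε)
    (B : Matrix (Fin k) (Fin k) ℂ) (hB : B.PosSemidef) (hBsq : B * B = T * Tᴴ) :
    ∃ P : Matrix (Fin k) (Fin k) ℂ, P.IsHermitian ∧ P * P = P ∧
      LinearMap.range (Matrix.toLin' P) ≤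
        LinearMap.range (Matrix.toLin' (specProj hB.isHermitian (Set.Icc 0 (‖Y‖ + ε)))) ∧
      normTraceR (1 - P) ≤ 2 * ε ∧ ‖P * (T - Y)‖ ≤ ε := by
  set E := specProj hB.isHermitian (Set.Icc 0 (‖Y‖ + ε))
  set W := range (toEuclideanLin Q) ⊓ range (toEuclideanLin E)
  set P := W.starProjectionMatrix
  have hP : IsStarProjection P := W.isStarProjection_starProjectionMatrix
  have hPW : range (toEuclideanLin P) = W := W.range_toEuclideanLin_starProjectionMatrix
  have hQP : Q * P = P := mul_eq_self_of_range_toEuclideanLin_le hQidem (hPW.le.trans inf_le_left)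
  have hEP : E * P = P := mul_eq_self_of_range_toEuclideanLin_le
    (hB.isHermitian.isIdempotentElem_specProj _) (hPW.le.trans inf_le_right)
  have hPQ : P * Q = P := by
    simpa [hP.isSelfAdjoint.star_eq, hQher.isSelfAdjoint.star_eq] using congr(star $hQP)
  refine ⟨P, hP.isSelfAdjoint, hP.isIdempotentElem, range_toLin'_le_of_mul_eq hEP, ?_, ?_⟩
  · calc normTraceR (1 - P) ≤ 2 * normTraceR (1 - Q) :=
          normTraceR_one_sub_le_two_mul hP.isIdempotentElem hQidem hPW
            (disjoint_ker_specProj_range ⟨hQidem, hQher⟩ (by linarith) hB hBsq)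
      _ ≤ 2 * ε := by linarith
  · calc ‖P * (T - Y)‖ = ‖P * (Q * (T - Y))‖ := by rw [← Matrix.mul_assoc, hPQ]
      _ ≤ ‖P‖ * ‖Q * (T - Y)‖ := l2_opNorm_mul _ _
      _ ≤ 1 * ε := mul_le_mul W.norm_starProjectionMatrix_le hQT (norm_nonneg _) zero_le_one
      _ = ε := one_mul ε

/-- Given `T, Y ∈ M_k(ℂ)`, `R = ‖Y‖_∞`, and a projection `Q` with
`‖Q(T−Y)‖_∞ ≤ ε` and `tr(1−Q) ≤ ε`, there is a projection `P` under the spectral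
projection `χ_{[0,R+ε]}(|T^*|)` with `tr(1−P) ≤ 2ε` and `‖P(T−Y)‖_∞ ≤ ε`. -/
theorem stmt11 (k : ℕ) (hk : 1 ≤ k) (T Y : Matrix (Fin k) (Fin k) ℂ) (ε : ℝ) (hε : 0 < ε)
    (Q : Matrix (Fin k) (Fin k) ℂ) (hQher : Q.IsHermitian) (hQidem : Q * Q = Q)
    (hQT : ‖Q * (T - Y)‖ ≤ ε) (hQtr : normTraceR (1 - Q) ≤ ε)
    (B : Matrix (Fin k) (Fin k) ℂ) (hB : B.PosSemidef) (hBsq : B * B = T * Tᴴ) :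
    ∃ P : Matrix (Fin k) (Fin k) ℂ, P.IsHermitian ∧ P * P = P ∧
      LinearMap.range (Matrix.toLin' P) ≤
        LinearMap.range (Matrix.toLin' (specProj hB.isHermitian (Set.Icc 0 (‖Y‖ + ε)))) ∧
      normTraceR (1 - P) ≤ 2 * ε ∧ ‖P * (T - Y)‖ ≤ ε :=
  stmt11_general k T Y ε Q hQher hQidem hQT hQtr B hB hBsq
end

section
/- Let (M,τ) be a tracial von Neumann algebra, N ⊆ M a von Neumann subalgebra, and define the singular subspace H_s(N ⊆ M) = {ξ ∈ L²(M) : L²(NξN) is disjoint from L²(N) ⊗ L²(N^op) as an N-N bimodule}. Then H_s(N ⊆ M) is a closed linear subspace of L²(M,τ) which is invariant under left and right multiplication by elements of N; indeed, H_s(N ⊆ M) equals the intersection of the kernels of all bounded N-N bimodular maps T : L²(M) → L²(N) ⊗ L²(N^op). -/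
/-!
A bounded bimodular map `T : L²(NξN) → E` extends to the bimodular map `T ∘ P` on `L²(M)`, where
`P` is the orthogonal projection onto `L²(NξN)`: since `N` is closed under adjoints, this subspace
is invariant under the adjoints of the actions of `N` as well, so `P` commutes with them.
Conversely a bimodular map on `L²(M)` restricts to `L²(NξN)`, and one that kills `ξ` kills all of
`L²(NξN)`. Hence `H_s` is the intersection of the kernels of the bimodular maps
`L²(M) → E`, which is a closed subspace, and invariant because these maps are bimodular.
-/

open ContinuousLinearMap MulOpposite

section Projection

variable {𝕜 E F : Type*} [RCLike 𝕜] [NormedAddCommGroup E] [InnerProductSpace 𝕜 E]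
  [CompleteSpace E] [AddCommGroup F] [Module 𝕜 F] [TopologicalSpace F]

theorem Submodule.orthogonalProjectionOnto_apply_of_mapsTo (U : Submodule 𝕜 E)
    [U.HasOrthogonalProjection] {u : E →L[𝕜] E} (hu : Set.MapsTo u U U)
    (hu' : Set.MapsTo (adjoint u) U U) (x : E) :
    U.orthogonalProjectionOnto (u x) =
      ⟨u (U.orthogonalProjectionOnto x), hu (U.orthogonalProjectionOnto x).2⟩ := by
  refine Subtype.ext <|
    U.eq_starProjection_of_mem_orthogonal (hu (U.orthogonalProjectionOnto x).2) ?_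
  change u x - u (U.starProjection x) ∈ Uᗮ
  rw [← map_sub]
  exact orthogonal_mem_invtSubmodule hu' (U.sub_starProjection_mem_orthogonal x)

theorem ContinuousLinearMap.comp_orthogonalProjectionOnto_comp_eq (U : Submodule 𝕜 E)
    [U.HasOrthogonalProjection] {u : E →L[𝕜] E} (hu : Set.MapsTo u U U)
    (hu' : Set.MapsTo (adjoint u) U U) {v : F →L[𝕜] F} (T : U →L[𝕜] F)
    (hT : ∀ x : U, T ⟨u x, hu x.2⟩ = v (T x)) :
    (T ∘L U.orthogonalProjectionOnto) ∘L u = v ∘L T ∘L U.orthogonalProjectionOnto := by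
  ext x
  rw [comp_apply, comp_apply, U.orthogonalProjectionOnto_apply_of_mapsTo hu hu']
  exact hT _

end Projection

theorem ContinuousLinearMap.adjoint_map_star {𝕜 E S : Type*} [RCLike 𝕜] [NormedAddCommGroup E]
    [InnerProductSpace 𝕜 E] [CompleteSpace E] [Semiring S] [Algebra 𝕜 S] [Star S]
    (φ : S →⋆ₐ[𝕜] (E →L[𝕜] E)) (s : S) : adjoint (φ s) = φ (star s) := by
  rw [← star_eq_adjoint, map_star]

section SingularSubspace

variable {A B H E : Type*} [NormedRing A] [StarRing A] [NormedAlgebra ℂ A]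
  [NormedRing B] [StarRing B] [NormedAlgebra ℂ B]
  [NormedAddCommGroup H] [InnerProductSpace ℂ H] [CompleteSpace H]
  [NormedAddCommGroup E] [InnerProductSpace ℂ E] [CompleteSpace E]
  (ι : A →⋆ₐ[ℂ] B) (L : B →⋆ₐ[ℂ] (H →L[ℂ] H)) (R : Bᵐᵒᵖ →⋆ₐ[ℂ] (H →L[ℂ] H))
  (Lc : A →⋆ₐ[ℂ] (E →L[ℂ] E)) (Rc : Aᵐᵒᵖ →⋆ₐ[ℂ] (E →L[ℂ] E))

def IsBimodular (T : H →L[ℂ] E) : Prop :=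
  (∀ a : A, T.comp (L (ι a)) = (Lc a).comp T) ∧
    (∀ a : A, T.comp (R (op (ι a))) = (Rc (op a)).comp T)

def bimodularKer : Submodule ℂ H :=
  ⨅ (T : H →L[ℂ] E) (_ : IsBimodular ι L R Lc Rc T), T.ker

theorem mem_bimodularKer {ξ : H} :
    ξ ∈ bimodularKer ι L R Lc Rc ↔ ∀ T : H →L[ℂ] E, IsBimodular ι L R Lc Rc T → T ξ = 0 := by
  simp only [bimodularKer, Submodule.mem_iInf, LinearMap.mem_ker, coe_coe]

theorem coe_bimodularKer :
    (bimodularKer ι L R Lc Rc : Set H) =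
      ⋂ T ∈ {T : H →L[ℂ] E | IsBimodular ι L R Lc Rc T}, T ⁻¹' {0} := by
  ext ξ
  simp [mem_bimodularKer]

theorem isClosed_bimodularKer : IsClosed (bimodularKer ι L R Lc Rc : Set H) := by
  rw [coe_bimodularKer]
  exact isClosed_biInter fun T _ ↦ isClosed_singleton.preimage T.continuous

variable {ι L R Lc Rc}

theorem IsBimodular.apply_left {T : H →L[ℂ] E} (hT : IsBimodular ι L R Lc Rc T) (a : A)
    (η : H) : T (L (ι a) η) = Lc a (T η) :=
  congr($(hT.1 a) η)

theorem IsBimodular.apply_right {T : H →L[ℂ] E} (hT : IsBimodular ι L R Lc Rc T) (a : A)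
    (η : H) : T (R (op (ι a)) η) = Rc (op a) (T η) :=
  congr($(hT.2 a) η)

theorem apply_left_mem_bimodularKer {ξ : H} (hξ : ξ ∈ bimodularKer ι L R Lc Rc) (a : A) :
    L (ι a) ξ ∈ bimodularKer ι L R Lc Rc := by
  rw [mem_bimodularKer] at hξ ⊢
  intro T hT
  rw [hT.apply_left, hξ T hT, map_zero]

theorem apply_right_mem_bimodularKer {ξ : H} (hξ : ξ ∈ bimodularKer ι L R Lc Rc) (a : A) :
    R (op (ι a)) ξ ∈ bimodularKer ι L R Lc Rc := by
  rw [mem_bimodularKer] at hξ ⊢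
  intro T hT
  rw [hT.apply_right, hξ T hT, map_zero]

theorem IsBimodular.closure_span_le_ker {T : H →L[ℂ] E} (hT : IsBimodular ι L R Lc Rc T) {ξ : H}
    (hξ : T ξ = 0) :
    (Submodule.span ℂ {η : H | ∃ x y : A, η = L (ι x) (R (op (ι y)) ξ)}).topologicalClosure ≤
      T.ker := by
  refine Submodule.topologicalClosure_minimal _ (Submodule.span_le.2 ?_) T.isClosed_ker
  rintro _ ⟨x, y, rfl⟩
  rw [SetLike.mem_coe, LinearMap.mem_ker, coe_coe, hT.apply_left, hT.apply_right, hξ, map_zero,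
    map_zero]

variable {S : Submodule ℂ H} (hSL : ∀ (a : A) (η : H), η ∈ S → L (ι a) η ∈ S)
  (hSR : ∀ (a : A) (η : H), η ∈ S → R (op (ι a)) η ∈ S)
include hSL hSR

theorem isBimodular_comp_orthogonalProjectionOnto [S.HasOrthogonalProjection] (T : S →L[ℂ] E)
    (hTL : ∀ (a : A) (η : S), T ⟨L (ι a) η, hSL a η η.2⟩ = Lc a (T η))
    (hTR : ∀ (a : A) (η : S), T ⟨R (op (ι a)) η, hSR a η η.2⟩ = Rc (op a) (T η)) :
    IsBimodular ι L R Lc Rc (T ∘L S.orthogonalProjectionOnto) := by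
  refine ⟨fun a ↦ comp_orthogonalProjectionOnto_comp_eq S (hSL a) ?_ T (hTL a),
    fun a ↦ comp_orthogonalProjectionOnto_comp_eq S (hSR a) ?_ T (hTR a)⟩
  · rw [adjoint_map_star, ← map_star]
    exact hSL (star a)
  · rw [adjoint_map_star, ← op_star, ← map_star]
    exact hSR (star a)

theorem forall_eq_zero_iff_mem_bimodularKer {ξ : H}
    (hS : S = (Submodule.span ℂ
      {η : H | ∃ x y : A, η = L (ι x) (R (op (ι y)) ξ)}).topologicalClosure) :
    (∀ T : S →L[ℂ] E,
      (∀ (a : A) (η : S), T ⟨L (ι a) η, hSL a η η.2⟩ = Lc a (T η)) →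
      (∀ (a : A) (η : S), T ⟨R (op (ι a)) η, hSR a η η.2⟩ = Rc (op a) (T η)) → T = 0) ↔
    ξ ∈ bimodularKer ι L R Lc Rc := by
  rw [mem_bimodularKer]
  constructor
  · intro h T hT
    have hξS : ξ ∈ S := hS.ge <|
      Submodule.le_topologicalClosure _ (Submodule.subset_span ⟨1, 1, by simp⟩)
    have h0 := h (T ∘L S.subtypeL) (fun a η ↦ hT.apply_left a η) (fun a η ↦ hT.apply_right a η)
    exact congr($h0 ⟨ξ, hξS⟩)
  · intro hξ T hTL hTR
    have : CompleteSpace S :=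
      (hS ▸ Submodule.isClosed_topologicalClosure _ : IsClosed (S : Set H)).completeSpace_coe
    have hT := isBimodular_comp_orthogonalProjectionOnto hSL hSR T hTL hTR
    have hker := hT.closure_span_le_ker (hξ _ hT)
    ext η
    simpa using hker (hS.le η.2)

end SingularSubspace

theorem stmt19_general {A B H E : Type*}
    [NormedRing A] [StarRing A] [NormedAlgebra ℂ A]
    [NormedRing B] [StarRing B] [NormedAlgebra ℂ B]
    [NormedAddCommGroup H] [InnerProductSpace ℂ H] [CompleteSpace H]
    [NormedAddCommGroup E] [InnerProductSpace ℂ E] [CompleteSpace E]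
    (ι : A →⋆ₐ[ℂ] B)
    (L : B →⋆ₐ[ℂ] (H →L[ℂ] H)) (R : Bᵐᵒᵖ →⋆ₐ[ℂ] (H →L[ℂ] H))
    (Lc : A →⋆ₐ[ℂ] (E →L[ℂ] E)) (Rc : Aᵐᵒᵖ →⋆ₐ[ℂ] (E →L[ℂ] E))
    -- `Sub ξ = L²(NξN)`:
    (Sub : H → Submodule ℂ H)
    (hSub : ∀ ξ : H, Sub ξ = (Submodule.span ℂ
      {η : H | ∃ x y : A, η = L (ι x) (R (op (ι y)) ξ)}).topologicalClosure)
    (hSL : ∀ (ξ : H) (a : A) (η : H), η ∈ Sub ξ → L (ι a) η ∈ Sub ξ)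
    (hSR : ∀ (ξ : H) (a : A) (η : H), η ∈ Sub ξ → R (op (ι a)) η ∈ Sub ξ) :
    -- the singular subspace: ξ such that every bounded N-N bimodular map
    -- L²(NξN) → L²(N)⊗L²(N^op) vanishes
    let Hs : Set H := {ξ : H | ∀ T : (Sub ξ) →L[ℂ] E,
      (∀ (a : A) (η : Sub ξ), T ⟨L (ι a) η, hSL ξ a η η.2⟩ = Lc a (T η)) →
      (∀ (a : A) (η : Sub ξ), T ⟨R (op (ι a)) η, hSR ξ a η η.2⟩ = Rc (op a) (T η)) →
      T = 0}
    -- Hs is a closed N-N invariant subspace of L²(M), and equals the intersection of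
    -- the kernels of all bounded N-N bimodular maps L²(M) → L²(N)⊗L²(N^op)
    (∃ W : Submodule ℂ H, (W : Set H) = Hs ∧ IsClosed (W : Set H)) ∧
    (∀ a : A, ∀ ξ ∈ Hs, L (ι a) ξ ∈ Hs ∧ R (op (ι a)) ξ ∈ Hs) ∧
    Hs = ⋂ T ∈ {T : H →L[ℂ] E |
        (∀ a : A, T.comp (L (ι a)) = (Lc a).comp T) ∧
        (∀ a : A, T.comp (R (op (ι a))) = (Rc (op a)).comp T)},
      T ⁻¹' {0} := by
  intro Hs
  have hHs : Hs = bimodularKer ι L R Lc Rc := Set.ext fun ξ ↦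
    forall_eq_zero_iff_mem_bimodularKer (hSL ξ) (hSR ξ) (hSub ξ)
  refine ⟨⟨_, hHs.symm, isClosed_bimodularKer ι L R Lc Rc⟩, ?_,
    hHs.trans (coe_bimodularKer ι L R Lc Rc)⟩
  rw [hHs]
  exact fun a ξ hξ ↦ ⟨apply_left_mem_bimodularKer hξ a, apply_right_mem_bimodularKer hξ a⟩

/-- Let `(M,τ)` be a tracial von Neumann algebra and `N ⊆ M` a subalgebra.  The singular
subspace `H_s(N ⊆ M) = {ξ ∈ L²(M) : L²(NξN)` is disjoint from the coarse `N`-`N`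
bimodule `}` is a closed subspace of `L²(M)` invariant under left and right
multiplication by `N`, and it equals the intersection of the kernels of all bounded
`N`-`N` bimodular maps `L²(M) → L²(N) ⊗ L²(N^op)`.

Modeling: `B` is a C*-algebra (`M`) with an injective unital embedding `ι : A → B` of
the subalgebra `N = A`, acting on `H = L²(M,τ)` by commuting left/right actions `L`, `R`
with cyclic trace vector `Ω`.  For `ξ ∈ H`, `Sub ξ = L²(NξN)` is the closed span of
`{x ξ y : x, y ∈ N}`, and `E` together with `t : K → K → E` (where `K = L²(N)` is the
closure of `NΩ`) is the coarse bimodule `L²(N) ⊗ L²(N^op)` with actions `Lc`, `Rc`. -/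
theorem stmt19 {A B H E : Type*}
    [NormedRing A] [StarRing A] [CStarRing A] [NormedAlgebra ℂ A]
    [NormedRing B] [StarRing B] [CStarRing B] [NormedAlgebra ℂ B]
    [NormedAddCommGroup H] [InnerProductSpace ℂ H] [CompleteSpace H]
    [NormedAddCommGroup E] [InnerProductSpace ℂ E] [CompleteSpace E]
    (ι : A →⋆ₐ[ℂ] B) (hι : Function.Injective ι)
    (L : B →⋆ₐ[ℂ] (H →L[ℂ] H)) (R : Bᵐᵒᵖ →⋆ₐ[ℂ] (H →L[ℂ] H))
    (hLR : ∀ (x : B) (y : Bᵐᵒᵖ), (L x).comp (R y) = (R y).comp (L x))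
    (Ω : H)
    (hcyc : (Submodule.span ℂ {ξ : H | ∃ b : B, ξ = L b Ω}).topologicalClosure = ⊤)
    (htrvec : ∀ b : B, L b Ω = R (op b) Ω)
    (htrace : ∀ x y : B, (inner ℂ (L (x * y) Ω) Ω : ℂ) = (inner ℂ (L (y * x) Ω) Ω : ℂ))
    -- `K = L²(N)` and the coarse bimodule `E = L²(N) ⊗ L²(N^op)`:
    (K : Submodule ℂ H)
    (hK : K = (Submodule.span ℂ {ξ : H | ∃ a : A, ξ = L (ι a) Ω}).topologicalClosure)
    (hKL : ∀ (a : A) (ξ : H), ξ ∈ K → L (ι a) ξ ∈ K)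
    (hKR : ∀ (a : A) (ξ : H), ξ ∈ K → R (op (ι a)) ξ ∈ K)
    (t : K → K → E)
    (htinner : ∀ ξ ξ' η η' : K,
      (inner ℂ (t ξ η) (t ξ' η') : ℂ) =
        (inner ℂ (ξ : H) (ξ' : H) : ℂ) * (inner ℂ (η : H) (η' : H) : ℂ))
    (htdense : (Submodule.span ℂ {z : E | ∃ ξ η, z = t ξ η}).topologicalClosure = ⊤)
    (Lc : A →⋆ₐ[ℂ] (E →L[ℂ] E)) (Rc : Aᵐᵒᵖ →⋆ₐ[ℂ] (E →L[ℂ] E))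
    (hLc : ∀ (a : A) (ξ η : K), Lc a (t ξ η) = t ⟨L (ι a) ξ, hKL a ξ ξ.2⟩ η)
    (hRc : ∀ (a : A) (ξ η : K), Rc (op a) (t ξ η) = t ξ ⟨R (op (ι a)) η, hKR a η η.2⟩)
    -- `Sub ξ = L²(NξN)`:
    (Sub : H → Submodule ℂ H)
    (hSub : ∀ ξ : H, Sub ξ = (Submodule.span ℂ
      {η : H | ∃ x y : A, η = L (ι x) (R (op (ι y)) ξ)}).topologicalClosure)
    (hSL : ∀ (ξ : H) (a : A) (η : H), η ∈ Sub ξ → L (ι a) η ∈ Sub ξ)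
    (hSR : ∀ (ξ : H) (a : A) (η : H), η ∈ Sub ξ → R (op (ι a)) η ∈ Sub ξ) :
    -- the singular subspace: ξ such that every bounded N-N bimodular map
    -- L²(NξN) → L²(N)⊗L²(N^op) vanishes
    let Hs : Set H := {ξ : H | ∀ T : (Sub ξ) →L[ℂ] E,
      (∀ (a : A) (η : Sub ξ), T ⟨L (ι a) η, hSL ξ a η η.2⟩ = Lc a (T η)) →
      (∀ (a : A) (η : Sub ξ), T ⟨R (op (ι a)) η, hSR ξ a η η.2⟩ = Rc (op a) (T η)) →
      T = 0}
    -- Hs is a closed N-N invariant subspace of L²(M), and equals the intersection of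
    -- the kernels of all bounded N-N bimodular maps L²(M) → L²(N)⊗L²(N^op)
    (∃ W : Submodule ℂ H, (W : Set H) = Hs ∧ IsClosed (W : Set H)) ∧
    (∀ a : A, ∀ ξ ∈ Hs, L (ι a) ξ ∈ Hs ∧ R (op (ι a)) ξ ∈ Hs) ∧
    Hs = ⋂ T ∈ {T : H →L[ℂ] E |
        (∀ a : A, T.comp (L (ι a)) = (Lc a).comp T) ∧
        (∀ a : A, T.comp (R (op (ι a))) = (Rc (op a)).comp T)},
      T ⁻¹' {0} :=
  stmt19_general ι L R Lc Rc Sub hSub hSL hSR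
end
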